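/- Let 𝒦 be a knot type complex and C a south-west region. Then the set T = {t ∈ ℝ : the inclusion 𝒦(C_t) ↪ 𝒦 induces a surjection on homology in Maslov grading d(𝒦)} is nonempty, bounded below, upward closed (t ∈ T and t' ≥ t imply t' ∈ T), and attains its infimum; moreover, for all sufficiently negative t the inclusion 𝒦(C_t) ↪ 𝒦 induces the zero map on homology in Maslov grading d(𝒦). In particular Υ^C(𝒦) = min T is a well-defined real number. -/

import Mathlib

open LaurentPolynomial

/-- The ring `𝔽₂[U, U⁻¹]` of Laurent polynomials over the field with two elements;
the variable `U` is `LaurentPolynomial.T 1`, and `U^k = T k`. -/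
abbrev R2 : Type := LaurentPolynomial (ZMod 2)

/-- The underlying data of an Alexander filtered, Maslov graded chain complex over
`R2 = 𝔽₂[U, U⁻¹]`: a finite basis (indexed by `Fin n`), a Maslov grading `M` and an
Alexander grading `A` on basis elements, and a differential matrix `D`, where `D x y`
is the coefficient of the basis element `y` in `∂x`.  An element of the complex is a
function `f : Fin n → R2` (its coordinates in the basis); the monomial `U^k·x`
(that is, `k ∈ (f x).support`) has Maslov grading `M x - 2k`, Alexander filtration
level `A x - k`, and algebraic filtration level `-k`. -/
structure PreCx where
  n : ℕ
  M : Fin n → ℚ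
  A : Fin n → ℤ
  D : Fin n → Fin n → R2

namespace PreCx

/-- The differential applied to an element `f : Fin K.n → R2` of the free module. -/
noncomputable def dApply (K : PreCx) (f : Fin K.n → R2) : Fin K.n → R2 :=
  fun y => ∑ x, K.D x y * f x

/-- `K` is an Alexander filtered, Maslov graded chain complex: `∂² = 0`, and every
monomial `U^k·y` appearing in `∂x` has `k ≥ 0` (only nonnegative powers of `U` occur),
Maslov grading `M y - 2k = M x - 1` (so `∂` drops the Maslov grading by exactly one)
and Alexander filtration level `A y - k ≤ A x` (so `∂` does not increase the Alexander
filtration level; its algebraic filtration level `-k ≤ 0` means `∂` does not increase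
the algebraic filtration level either). -/
def IsComplex (K : PreCx) : Prop :=
  (∀ x z, ∑ y, K.D x y * K.D y z = 0) ∧
  (∀ x y, ∀ k ∈ (K.D x y).coeff.support,
    (K.M y - 2 * (k : ℚ) = K.M x - 1) ∧ (K.A y - k ≤ K.A x) ∧ (0 ≤ k))

/-- `f` is homogeneous of Maslov grading `q`: every monomial `U^k·x` occurring in `f`
satisfies `M x - 2k = q`. -/
def Homog (K : PreCx) (f : Fin K.n → R2) (q : ℚ) : Prop :=
  ∀ x, ∀ k ∈ (f x).coeff.support, K.M x - 2 * (k : ℚ) = q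

/-- `f` is a boundary. -/
def IsBoundary (K : PreCx) (f : Fin K.n → R2) : Prop :=
  ∃ g, f = K.dApply g

/-- The cycle `ξ` is homogeneous of Maslov grading `q` and its homology class freely
generates the homology `H_*(K, ∂)` as an `R2`-module, i.e. `H_*(K,∂) ≅ 𝔽₂[U,U⁻¹]`
generated by a class of Maslov grading `q`. -/
def GeneratesHomology (K : PreCx) (ξ : Fin K.n → R2) (q : ℚ) : Prop :=
  K.dApply ξ = 0 ∧ K.Homog ξ q ∧
  (∀ z, K.dApply z = 0 → ∃ (r : R2) (g : Fin K.n → R2), z = r • ξ + K.dApply g) ∧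
  (∀ r : R2, K.IsBoundary (r • ξ) → r = 0)

/-- `K` is a knot type complex with correction term `dval`: an Alexander filtered,
Maslov graded chain complex whose homology is isomorphic to `𝔽₂[U, U⁻¹]`, generated
by a class of Maslov grading `dval`. -/
def IsKnotType (K : PreCx) (dval : ℚ) : Prop :=
  K.IsComplex ∧ ∃ ξ, K.GeneratesHomology ξ dval

/-- `K` is an acyclic Alexander filtered, Maslov graded chain complex. -/
def IsAcyclic (K : PreCx) : Prop :=
  K.IsComplex ∧ ∀ z, K.dApply z = 0 → K.IsBoundary z

/-- The direct sum of two complexes. -/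
noncomputable def dsum (K L : PreCx) : PreCx where
  n := K.n + L.n
  M := Fin.append K.M L.M
  A := Fin.append K.A L.A
  D := fun i j =>
    Matrix.fromBlocks K.D 0 0 L.D (finSumFinEquiv.symm i) (finSumFinEquiv.symm j)

/-- The tensor product (over `R2`) of two complexes: the basis is `B × B'`
(encoded via `finProdFinEquiv`), with `M(x⊗x') = M x + M x'`,
`A(x⊗x') = A x + A x'` and `∂(x⊗x') = (∂x)⊗x' + x⊗(∂x')`. -/
noncomputable def tensor (K L : PreCx) : PreCx where
  n := K.n * L.n
  M := fun i => K.M (finProdFinEquiv.symm i).1 + L.M (finProdFinEquiv.symm i).2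
  A := fun i => K.A (finProdFinEquiv.symm i).1 + L.A (finProdFinEquiv.symm i).2
  D := fun i j =>
    (if (finProdFinEquiv.symm i).2 = (finProdFinEquiv.symm j).2 then
      K.D (finProdFinEquiv.symm i).1 (finProdFinEquiv.symm j).1 else 0) +
    (if (finProdFinEquiv.symm i).1 = (finProdFinEquiv.symm j).1 then
      L.D (finProdFinEquiv.symm i).2 (finProdFinEquiv.symm j).2 else 0)

end PreCx

/-- The element `f ⊗ g` of the tensor product complex. -/
noncomputable def tensorElem (K L : PreCx) (f : Fin K.n → R2) (g : Fin L.n → R2) :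
    Fin (K.tensor L).n → R2 :=
  fun i => f (finProdFinEquiv.symm i).1 * g (finProdFinEquiv.symm i).2

/-- The trivial knot type complex `𝒯`: one basis element `e` with `∂e = 0`,
`M e = 0`, `A e = 0`.  This is `CFK^∞` of the unknot in `S³`. -/
noncomputable def Triv : PreCx where
  n := 1
  M := fun _ => 0
  A := fun _ => 0
  D := fun _ _ => 0

/-- `F` is (the matrix of) a map from `K` to `L` that shifts the Maslov grading by `s`
and respects both the Alexander and the algebraic filtrations: any monomial `U^k·y`
occurring in `F x` satisfies `M_L y - 2k = M_K x + s`, `A_L y - k ≤ A_K x` and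
`-k ≤ 0`. -/
def IsFilteredDeg (K L : PreCx) (F : Fin K.n → Fin L.n → R2) (s : ℚ) : Prop :=
  ∀ x y, ∀ k ∈ (F x y).coeff.support,
    (L.M y - 2 * (k : ℚ) = K.M x + s) ∧ (L.A y - k ≤ K.A x) ∧ (0 ≤ k)

/-- `F` is (the matrix of) a chain map from `K` to `L`. -/
def IsChainMap (K L : PreCx) (F : Fin K.n → Fin L.n → R2) : Prop :=
  ∀ x z, ∑ y, K.D x y * F y z = ∑ y, F x y * L.D y z

/-- Apply a map-matrix to an element. -/
noncomputable def mapApply (K L : PreCx) (F : Fin K.n → Fin L.n → R2) (f : Fin K.n → R2) :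
    Fin L.n → R2 :=
  fun y => ∑ x, F x y * f x

/-- Composition of map-matrices (first `F`, then `G`). -/
noncomputable def compMx (K L M' : PreCx) (F : Fin K.n → Fin L.n → R2)
    (G : Fin L.n → Fin M'.n → R2) : Fin K.n → Fin M'.n → R2 :=
  fun x z => ∑ y, F x y * G y z

/-- The identity map-matrix. -/
noncomputable def idMx (K : PreCx) : Fin K.n → Fin K.n → R2 :=
  fun x y => if x = y then 1 else 0

/-- The chain maps `F` and `G` from `K` to `L` are chain homotopic via a bi-filtered
homotopy of Maslov degree `+1` (recall that the coefficients are of characteristic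
two, so `F - G = F + G`). -/
def Homotopic (K L : PreCx) (F G : Fin K.n → Fin L.n → R2) : Prop :=
  ∃ H : Fin K.n → Fin L.n → R2, IsFilteredDeg K L H 1 ∧
    ∀ x z, F x z + G x z = (∑ y, K.D x y * H y z) + (∑ y, H x y * L.D y z)

/-- `K` and `L` are chain homotopy equivalent via Maslov grading preserving,
bi-filtered chain homotopy equivalences. -/
def FilteredHomotopyEquiv (K L : PreCx) : Prop :=
  ∃ (F : Fin K.n → Fin L.n → R2) (G : Fin L.n → Fin K.n → R2),
    IsChainMap K L F ∧ IsFilteredDeg K L F 0 ∧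
    IsChainMap L K G ∧ IsFilteredDeg L K G 0 ∧
    Homotopic K K (compMx K L K F G) (idMx K) ∧
    Homotopic L L (compMx L K L G F) (idMx L)

/-- `K` and `L` are isomorphic as Maslov graded, bi-filtered chain complexes. -/
def IsIso (K L : PreCx) : Prop :=
  ∃ (F : Fin K.n → Fin L.n → R2) (G : Fin L.n → Fin K.n → R2),
    IsChainMap K L F ∧ IsFilteredDeg K L F 0 ∧
    IsChainMap L K G ∧ IsFilteredDeg L K G 0 ∧
    compMx K L K F G = idMx K ∧ compMx L K L G F = idMx L

/-- Stable equivalence: `K₁ ⊕ 𝒜₁` and `K₂ ⊕ 𝒜₂` are (graded, bi-filtered) chain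
homotopy equivalent for some acyclic complexes `𝒜₁`, `𝒜₂`. -/
def StablyEquiv (K₁ K₂ : PreCx) : Prop :=
  ∃ A₁ A₂ : PreCx, A₁.IsAcyclic ∧ A₂.IsAcyclic ∧
    FilteredHomotopyEquiv (K₁.dsum A₁) (K₂.dsum A₂)

/-- The chain map `F : K → L` induces an isomorphism on homology: it is injective on
homology (a cycle whose image is a boundary is itself a boundary) and surjective on
homology (every cycle of `L` is, up to a boundary, the image of a cycle of `K`;
recall that coefficients have characteristic two, so `w - F z = w + F z`). -/
def InducesHomologyIso (K L : PreCx) (F : Fin K.n → Fin L.n → R2) : Prop :=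
  (∀ z, K.dApply z = 0 → L.IsBoundary (mapApply K L F z) → K.IsBoundary z) ∧
  (∀ w, L.dApply w = 0 → ∃ z, K.dApply z = 0 ∧ L.IsBoundary (w + mapApply K L F z))

/-- Local equivalence: there are Maslov graded, bi-filtered chain maps in both
directions, each inducing an isomorphism on homology. -/
def LocallyEquiv (K₁ K₂ : PreCx) : Prop :=
  ∃ (F : Fin K₁.n → Fin K₂.n → R2) (G : Fin K₂.n → Fin K₁.n → R2),
    IsChainMap K₁ K₂ F ∧ IsFilteredDeg K₁ K₂ F 0 ∧
    IsChainMap K₂ K₁ G ∧ IsFilteredDeg K₂ K₁ G 0 ∧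
    InducesHomologyIso K₁ K₂ F ∧ InducesHomologyIso K₂ K₁ G

/-- A south-west region of the plane. -/
def SouthWest (C : Set (ℝ × ℝ)) : Prop :=
  C.Nonempty ∧ IsClosed C ∧ C ≠ Set.univ ∧
    ∀ p ∈ C, ∀ q : ℝ × ℝ, q.1 ≤ p.1 → q.2 ≤ p.2 → q ∈ C

/-- `f ∈ K(C_t)`: every monomial `U^k·x` occurring in `f`, located at the point
`(Alexander level, algebraic level) = (A x - k, -k)`, lies in the translate `C_t`
of `C` by the vector `(t, t)`. -/
def PreCx.InRegion (K : PreCx) (C : Set (ℝ × ℝ)) (t : ℝ) (f : Fin K.n → R2) : Prop :=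
  ∀ x, ∀ k ∈ (f x).coeff.support, ((((K.A x - k : ℤ) : ℝ) - t, -(k : ℝ) - t) : ℝ × ℝ) ∈ C

/-- The inclusion `K(C_t) ↪ K` induces a surjection on homology in Maslov grading
`dval`: there is a cycle in `K(C_t)`, homogeneous of Maslov grading `dval`, which is
not a boundary in `K` (for a knot type complex with correction term `dval`, the
homology in Maslov grading `dval` is `𝔽₂`, so such a cycle represents its
generator). -/
def SurjTop (K : PreCx) (dval : ℚ) (C : Set (ℝ × ℝ)) (t : ℝ) : Prop :=
  ∃ z, K.InRegion C t z ∧ K.dApply z = 0 ∧ K.Homog z dval ∧ ¬ K.IsBoundary z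

/-- The upsilon invariant `Υ^C(K)` of a knot type complex `K` with correction term
`dval`, associated to the south-west region `C`. -/
noncomputable def UpsilonC (K : PreCx) (dval : ℚ) (C : Set (ℝ × ℝ)) : ℝ :=
  sInf {t : ℝ | SurjTop K dval C t}

/-- The south-west half-plane `H_t`, for `t ∈ [0,2]`: for `t < 2` it is
`{(x,y) : y ≤ (t/(t-2))·x}`, and `H₂ = {(x,y) : x ≤ 0}`. -/
def Ht (t : ℝ) : Set (ℝ × ℝ) :=
  {p : ℝ × ℝ | (t = 2 ∧ p.1 ≤ 0) ∨ (t ≠ 2 ∧ p.2 ≤ (t / (t - 2)) * p.1)}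

/-- The upsilon function `Υ_t(K) = -2·Υ^{H_t}(K)`. -/
noncomputable def UpsilonT (K : PreCx) (dval : ℚ) (t : ℝ) : ℝ :=
  -2 * UpsilonC K dval (Ht t)

/-!
A homogeneous element of Maslov grading `d` has in each coordinate `x` at most the single
monomial `U^k` with `M x - 2k = d`, so there are only finitely many of them. Since `C` is a
closed south-west region, the times `t` with `z ∈ 𝒦(C_t)` form a closed up-set of `ℝ`, which
contains a neighbourhood of `+∞` and, for `z ≠ 0`, misses a neighbourhood of `-∞`. Hence `T`
is a finite union of closed rays, it contains the ray of the generator of the homology, and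
every nonzero grading-`d` element leaves `𝒦(C_t)` below one common bound.
-/

open Filter

theorem R2.eq_of_support_eq {f g : R2} (h : f.coeff.support = g.coeff.support) : f = g := by
  have key : ∀ a b : ZMod 2, (a = 0 ↔ b = 0) → a = b := by decide
  refine AddMonoidAlgebra.coeff_injective (Finsupp.ext fun k => key _ _ ?_)
  simpa only [Finsupp.notMem_support_iff] using (Finset.ext_iff.mp h k).not

namespace SouthWest

variable {C : Set (ℝ × ℝ)}

theorem mem_of_le (hC : SouthWest C) {p q : ℝ × ℝ} (hp : p ∈ C) (hqp : q ≤ p) : q ∈ C :=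
  hC.2.2.2 p hp q hqp.1 hqp.2

theorem eventually_mem_atTop (hC : SouthWest C) (a b : ℝ) :
    ∀ᶠ t in atTop, (a - t, b - t) ∈ C := by
  obtain ⟨p, hp⟩ := hC.1
  filter_upwards [eventually_ge_atTop (max (a - p.1) (b - p.2))] with t ht
  exact hC.mem_of_le hp ⟨by simp only; linarith [le_max_left (a - p.1) (b - p.2)],
    by simp only; linarith [le_max_right (a - p.1) (b - p.2)]⟩

theorem eventually_notMem_atBot (hC : SouthWest C) (a b : ℝ) :
    ∀ᶠ t in atBot, (a - t, b - t) ∉ C := by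
  obtain ⟨q, hq⟩ := (Set.ne_univ_iff_exists_notMem C).mp hC.2.2.1
  filter_upwards [eventually_le_atBot (min (a - q.1) (b - q.2))] with t ht hmem
  exact hq (hC.mem_of_le hmem ⟨by simp only; linarith [min_le_left (a - q.1) (b - q.2)],
    by simp only; linarith [min_le_right (a - q.1) (b - q.2)]⟩)

end SouthWest

namespace PreCx

variable {K : PreCx} {C : Set (ℝ × ℝ)} {q : ℚ}

theorem isBoundary_zero (K : PreCx) : K.IsBoundary 0 :=
  ⟨0, funext fun y => by simp [dApply]⟩

theorem GeneratesHomology.not_isBoundary {ξ : Fin K.n → R2} (hξ : K.GeneratesHomology ξ q) :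
    ¬ K.IsBoundary ξ := fun hb =>
  one_ne_zero (hξ.2.2.2 1 (by rwa [one_smul]))

theorem Homog.eq_of_mem_support {z z' : Fin K.n → R2} (hz : K.Homog z q) (hz' : K.Homog z' q)
    {x : Fin K.n} {k k' : ℤ} (hk : k ∈ (z x).coeff.support) (hk' : k' ∈ (z' x).coeff.support) :
    k = k' := by
  have h := (hz x k hk).trans (hz' x k' hk').symm
  exact_mod_cast (show (k : ℚ) = k' by linarith)

/-- A homogeneous element has at most one monomial in each coordinate. -/
theorem Homog.ext {z z' : Fin K.n → R2} (hz : K.Homog z q) (hz' : K.Homog z' q)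
    (h : ∀ x, z x = 0 ↔ z' x = 0) : z = z' := by
  funext x
  by_cases h0 : z x = 0
  · rw [h0, ((h x).mp h0)]
  obtain ⟨k', hk'⟩ : (z' x).coeff.support.Nonempty := by
    simpa [Finsupp.support_nonempty_iff] using mt (h x).mpr h0
  obtain ⟨k, hk⟩ : (z x).coeff.support.Nonempty := by
    simpa [Finsupp.support_nonempty_iff] using h0
  refine R2.eq_of_support_eq (Finset.ext fun j => ⟨fun hj => ?_, fun hj => ?_⟩)
  · rwa [hz.eq_of_mem_support hz' hj hk']
  · rwa [hz'.eq_of_mem_support hz hj hk]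

theorem finite_setOf_homog (K : PreCx) (q : ℚ) : {z : Fin K.n → R2 | K.Homog z q}.Finite :=
  Set.Finite.of_finite_image (f := fun z x => z x = 0) (Set.toFinite _)
    fun _ hz _ hz' h => Homog.ext hz hz' fun x => Eq.to_iff (congrFun h x)

theorem InRegion.mono (hC : SouthWest C) {z : Fin K.n → R2} {t t' : ℝ}
    (hz : K.InRegion C t z) (htt' : t ≤ t') : K.InRegion C t' z := fun x k hk =>
  hC.mem_of_le (hz x k hk) ⟨by simp only; linarith, by simp only; linarith⟩

theorem isClosed_setOf_inRegion (hC : IsClosed C) (z : Fin K.n → R2) :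
    IsClosed {t : ℝ | K.InRegion C t z} := by
  simp only [InRegion, Set.ofPred_forall]
  exact isClosed_iInter fun x => isClosed_iInter fun k => isClosed_iInter fun _ =>
    hC.preimage ((continuous_const.sub continuous_id).prodMk (continuous_const.sub continuous_id))

theorem eventually_inRegion_atTop (hC : SouthWest C) (z : Fin K.n → R2) :
    ∀ᶠ t in atTop, K.InRegion C t z :=
  eventually_all.mpr fun _ => (eventually_all_finset _).mpr fun _ _ =>
    hC.eventually_mem_atTop _ _

theorem eventually_not_inRegion_atBot (hC : SouthWest C) {z : Fin K.n → R2} (hz : z ≠ 0) :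
    ∀ᶠ t in atBot, ¬ K.InRegion C t z := by
  obtain ⟨x, hx⟩ := Function.ne_iff.mp hz
  obtain ⟨k, hk⟩ : (z x).coeff.support.Nonempty := by
    simpa [Finsupp.support_nonempty_iff] using hx
  filter_upwards [hC.eventually_notMem_atBot (K.A x - k : ℤ) (-(k : ℝ))] with t ht hz
  exact ht (hz x k hk)

/-- Since there are only finitely many homogeneous elements of a given grading, the bound on
`t` can be chosen uniformly. -/
theorem eventually_homog_inRegion_eq_zero (hC : SouthWest C) (K : PreCx) (q : ℚ) :
    ∀ᶠ t in atBot, ∀ z, K.Homog z q → K.InRegion C t z → z = 0 := by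
  have h : ∀ z ∈ {z | K.Homog z q}, ∀ᶠ t in atBot, K.InRegion C t z → z = 0 := fun z _ => by
    by_cases hz : z = 0
    · exact Eventually.of_forall fun _ _ => hz
    · filter_upwards [eventually_not_inRegion_atBot hC hz] with t ht hreg using absurd hreg ht
  filter_upwards [(eventually_all_finite (K.finite_setOf_homog q)).mpr h] with t ht z hz
  exact ht z hz

end PreCx

section

variable {K : PreCx} {C : Set (ℝ × ℝ)} {q : ℚ}

theorem SurjTop.mono (hC : SouthWest C) {t t' : ℝ} (ht : SurjTop K q C t) (htt' : t ≤ t') :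
    SurjTop K q C t' :=
  let ⟨z, hreg, hcyc, hhom, hnb⟩ := ht
  ⟨z, hreg.mono hC htt', hcyc, hhom, hnb⟩

theorem isClosed_setOf_surjTop (hC : IsClosed C) (K : PreCx) (q : ℚ) :
    IsClosed {t : ℝ | SurjTop K q C t} := by
  have hT : {t : ℝ | SurjTop K q C t} =
      ⋃ z ∈ {z | K.Homog z q ∧ K.dApply z = 0 ∧ ¬ K.IsBoundary z}, {t | K.InRegion C t z} := by
    ext t
    simp only [SurjTop, Set.mem_ofPred_eq, Set.mem_iUnion, exists_prop]
    exact exists_congr fun z => by tauto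
  rw [hT]
  exact ((K.finite_setOf_homog q).subset fun _ h => h.1).isClosed_biUnion
    fun z _ => PreCx.isClosed_setOf_inRegion hC z

end

/-- For a knot type complex `𝒦` and a south-west region `C`, the set
`T = {t : the inclusion 𝒦(C_t) ↪ 𝒦 induces a surjection on homology in Maslov grading
d(𝒦)}` is nonempty, bounded below, upward closed, and attains its infimum; moreover,
for all sufficiently negative `t` the inclusion `𝒦(C_t) ↪ 𝒦` induces the zero map on
homology in Maslov grading `d(𝒦)` (every grading-`d(𝒦)` cycle of `𝒦(C_t)` is a
boundary in `𝒦`).  In particular `Υ^C(𝒦) = min T` is a well-defined real number. -/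
theorem surjTop_set_properties (K : PreCx) (dval : ℚ) (hK : K.IsKnotType dval)
    (C : Set (ℝ × ℝ)) (hC : SouthWest C) :
    {t : ℝ | SurjTop K dval C t}.Nonempty ∧
    BddBelow {t : ℝ | SurjTop K dval C t} ∧
    (∀ t, SurjTop K dval C t → ∀ t', t ≤ t' → SurjTop K dval C t') ∧
    SurjTop K dval C (sInf {t : ℝ | SurjTop K dval C t}) ∧
    ∃ t₀ : ℝ, ∀ t ≤ t₀, ∀ z, K.InRegion C t z → K.dApply z = 0 → K.Homog z dval →
      K.IsBoundary z := by
  obtain ⟨-, ξ, hξ⟩ := hK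
  have hne : {t : ℝ | SurjTop K dval C t}.Nonempty :=
    ((K.eventually_inRegion_atTop hC ξ).exists).imp fun _ hreg =>
      ⟨ξ, hreg, hξ.1, hξ.2.1, hξ.not_isBoundary⟩
  obtain ⟨t₀, ht₀⟩ := eventually_atBot.mp (PreCx.eventually_homog_inRegion_eq_zero hC K dval)
  have hzero : ∀ t ≤ t₀, ∀ z, K.InRegion C t z → K.dApply z = 0 → K.Homog z dval →
      K.IsBoundary z := fun t ht z hreg _ hhom =>
    ht₀ t ht z hhom hreg ▸ K.isBoundary_zero
  have hbdd : BddBelow {t : ℝ | SurjTop K dval C t} := ⟨t₀, fun t ⟨z, hreg, hcyc, hhom, hnb⟩ =>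
    le_of_not_gt fun hlt => hnb (hzero t hlt.le z hreg hcyc hhom)⟩
  exact ⟨hne, hbdd, fun _ ht _ htt' => SurjTop.mono hC ht htt',
    (isClosed_setOf_surjTop hC.2.1 K dval).csInf_mem hne hbdd, t₀, hzero⟩
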